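/- If w = (−1,b,c) ∈ ℤ³ is a numerical wall datum with first coordinate a = −1 and with j(w) ≥ 0, then b > 0, Δk²b² ≥ Δh² − 1, and 4k²b² < 9h². In particular no such numerical wall datum exists when 2k ≥ 3h. (Case 3 of the proof of the Main Theorem.) -/

import Mathlib

/-- The Mukai pairing on the algebraic Mukai lattice ℤ³ of a K3 surface `S` with
`Pic(S) = ℤ·H`, `H² = 2Δk²`, identifying `(r, xH, s)` with `(r, x, s)`:
`⟨(r,x,s),(r′,x′,s′)⟩ = 2Δk²xx′ − rs′ − r′s`. -/
def mukaiPair (Δ k : ℤ) (w w' : ℤ × ℤ × ℤ) : ℤ :=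
  2 * Δ * k ^ 2 * w.2.1 * w'.2.1 - w.1 * w'.2.2 - w'.1 * w.2.2

/-- The Mukai vector `v = (1, 0, −Δh²)` of the Hilbert scheme of `Δh²+1` points. -/
def mukaiV (Δ h : ℤ) : ℤ × ℤ × ℤ := (1, 0, -(Δ * h ^ 2))

/-- The slope `Γ = −2Δk²b / (Δh²a + c)` associated to `w = (a,b,c)`. -/
def wallGamma (Δ h k : ℤ) (w : ℤ × ℤ × ℤ) : ℚ :=
  ((-(2 * Δ * k ^ 2 * w.2.1) : ℤ) : ℚ) / ((Δ * h ^ 2 * w.1 + w.2.2 : ℤ) : ℚ)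

/-- `w = (a,b,c) ∈ ℤ³` is a numerical wall datum (for the interior of the movable cone of
`Hilb^{Δh²+1}(S)`) if:
(W1) `Δh²a + c ≠ 0` and `Γ := −2Δk²b/(Δh²a + c)` satisfies `2k²/(h²+k²+1) ≤ Γ < k/h`;
(W2) `Γ·b + a ≥ 0` and `−Γ·b + 1 − a ≥ 0`;
(W3) either `⟨w,w⟩ = −2` and `−Δh² ≤ ⟨w,v⟩ ≤ Δh²`, or `⟨w,w⟩ ≥ 0`, `2⟨w,w⟩ < Δh²` and
     `2⟨w,w⟩ + 1 ≤ ⟨w,v⟩ ≤ Δh²`;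
(W4) `⟨w,v⟩² > 2Δh²·⟨w,w⟩`. -/
def IsWallDatum (Δ h k : ℤ) (w : ℤ × ℤ × ℤ) : Prop :=
  Δ * h ^ 2 * w.1 + w.2.2 ≠ 0 ∧
  (2 * (k : ℚ) ^ 2 / ((h : ℚ) ^ 2 + (k : ℚ) ^ 2 + 1) ≤ wallGamma Δ h k w ∧
    wallGamma Δ h k w < (k : ℚ) / (h : ℚ)) ∧
  (0 ≤ wallGamma Δ h k w * (w.2.1 : ℚ) + (w.1 : ℚ) ∧
    0 ≤ -(wallGamma Δ h k w * (w.2.1 : ℚ)) + 1 - (w.1 : ℚ)) ∧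
  ((mukaiPair Δ k w w = -2 ∧ -(Δ * h ^ 2) ≤ mukaiPair Δ k w (mukaiV Δ h) ∧
      mukaiPair Δ k w (mukaiV Δ h) ≤ Δ * h ^ 2) ∨
    (0 ≤ mukaiPair Δ k w w ∧ 2 * mukaiPair Δ k w w < Δ * h ^ 2 ∧
      2 * mukaiPair Δ k w w + 1 ≤ mukaiPair Δ k w (mukaiV Δ h) ∧
      mukaiPair Δ k w (mukaiV Δ h) ≤ Δ * h ^ 2)) ∧
  (mukaiPair Δ k w (mukaiV Δ h)) ^ 2 > 2 * Δ * h ^ 2 * mukaiPair Δ k w w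

/-!
For `w = (-1, b, c)` one has `j(w) = -Δh² - c` and `⟨w,w⟩ = 2Δk²b² + 2c`, so `j(w) ≥ 0` and (W3)
pin `-c` between `Δh²` and `2Δh²`; `⟨w,w⟩ ≥ -2` then gives `Δk²b² ≥ Δh² - 1`. The slope is
`Γ = 2Δk²b / (Δh² - c)` with denominator in `(0, 3Δh²]`, so `Γ > 0` forces `b > 0` and
`Γ < k/h` forces `2kb < 3h`. When `2k ≥ 3h` this contradicts `b ≥ 1`.
-/

section MukaiLattice

variable {Δ h k : ℤ}

theorem mukaiPair_self (w : ℤ × ℤ × ℤ) :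
    mukaiPair Δ k w w = 2 * Δ * k ^ 2 * w.2.1 ^ 2 - 2 * w.1 * w.2.2 := by
  unfold mukaiPair
  ring

theorem mukaiPair_mukaiV (w : ℤ × ℤ × ℤ) :
    mukaiPair Δ k w (mukaiV Δ h) = Δ * h ^ 2 * w.1 - w.2.2 := by
  simp only [mukaiPair, mukaiV]
  ring

theorem wallGamma_neg_one (b c : ℤ) :
    wallGamma Δ h k (-1, b, c) = 2 * Δ * k ^ 2 * b / (Δ * h ^ 2 - c) := by
  rw [wallGamma, ← neg_div_neg_eq]
  push_cast
  ring_nf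

namespace IsWallDatum

variable {w : ℤ × ℤ × ℤ}

theorem neg_two_le_mukaiPair_self (hw : IsWallDatum Δ h k w) : -2 ≤ mukaiPair Δ k w w := by
  rcases hw.2.2.2.1 with ⟨hself, -⟩ | ⟨hself, -⟩ <;> omega

theorem mukaiPair_mukaiV_le (hw : IsWallDatum Δ h k w) :
    mukaiPair Δ k w (mukaiV Δ h) ≤ Δ * h ^ 2 := by
  rcases hw.2.2.2.1 with ⟨-, -, hj⟩ | ⟨-, -, -, hj⟩ <;> exact hj

theorem wallGamma_pos (hk : 0 < k) (hw : IsWallDatum Δ h k w) : 0 < wallGamma Δ h k w :=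
  lt_of_lt_of_le (by positivity) hw.2.1.1

variable {b c : ℤ}

theorem neg_one_c_bounds (hw : IsWallDatum Δ h k (-1, b, c))
    (hj : 0 ≤ mukaiPair Δ k (-1, b, c) (mukaiV Δ h)) :
    Δ * h ^ 2 ≤ -c ∧ -c ≤ 2 * Δ * h ^ 2 := by
  have hle := hw.mukaiPair_mukaiV_le
  rw [mukaiPair_mukaiV] at hj hle
  constructor <;> linarith

theorem neg_one_sub_one_le_mul_sq (hw : IsWallDatum Δ h k (-1, b, c))
    (hj : 0 ≤ mukaiPair Δ k (-1, b, c) (mukaiV Δ h)) :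
    Δ * h ^ 2 - 1 ≤ Δ * k ^ 2 * b ^ 2 := by
  have hself := hw.neg_two_le_mukaiPair_self
  rw [mukaiPair_self] at hself
  linarith [(hw.neg_one_c_bounds hj).1]

theorem neg_one_denom_pos (hΔ : 0 ≤ Δ) (hw : IsWallDatum Δ h k (-1, b, c))
    (hj : 0 ≤ mukaiPair Δ k (-1, b, c) (mukaiV Δ h)) : 0 < Δ * h ^ 2 - c := by
  have hne : Δ * h ^ 2 * -1 + c ≠ 0 := hw.1
  have hc := (hw.neg_one_c_bounds hj).1
  have : 0 ≤ Δ * h ^ 2 := by positivity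
  omega

theorem neg_one_b_pos (hΔ : 0 < Δ) (hk : 0 < k) (hw : IsWallDatum Δ h k (-1, b, c))
    (hj : 0 ≤ mukaiPair Δ k (-1, b, c) (mukaiV Δ h)) : 0 < b := by
  have hden : (0 : ℚ) < Δ * h ^ 2 - c := mod_cast hw.neg_one_denom_pos hΔ.le hj
  have hΓ := hw.wallGamma_pos hk
  rw [wallGamma_neg_one, div_pos_iff_of_pos_right hden] at hΓ
  have : 0 < 2 * Δ * k ^ 2 * b := by exact_mod_cast hΓ
  exact pos_of_mul_pos_right this (by positivity)

theorem neg_one_two_mul_b_lt (hΔ : 0 < Δ) (hh : 0 < h) (hk : 0 < k)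
    (hw : IsWallDatum Δ h k (-1, b, c)) (hj : 0 ≤ mukaiPair Δ k (-1, b, c) (mukaiV Δ h)) :
    2 * k * b < 3 * h := by
  have hden := hw.neg_one_denom_pos hΔ.le hj
  have hΓ : wallGamma Δ h k (-1, b, c) < k / h := hw.2.1.2
  rw [wallGamma_neg_one, div_lt_div_iff₀ (by exact_mod_cast hden) (by exact_mod_cast hh)] at hΓ
  have hslope : 2 * Δ * k ^ 2 * b * h < k * (Δ * h ^ 2 - c) := by exact_mod_cast hΓ
  have hscaled : Δ * k * h * (2 * k * b) < Δ * k * h * (3 * h) :=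
    calc Δ * k * h * (2 * k * b) = 2 * Δ * k ^ 2 * b * h := by ring
      _ < k * (Δ * h ^ 2 - c) := hslope
      _ ≤ k * (3 * Δ * h ^ 2) := by gcongr; linarith [(hw.neg_one_c_bounds hj).2]
      _ = Δ * k * h * (3 * h) := by ring
  exact lt_of_mul_lt_mul_left hscaled (by positivity)

end IsWallDatum

end MukaiLattice

theorem wall_datum_case_a_eq_neg_one_general (Δ h k : ℤ) (hΔ : 0 < Δ) (hh : 0 < h) (hk : 0 < k) :
    (∀ b c : ℤ, IsWallDatum Δ h k (-1, b, c) →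
      0 ≤ mukaiPair Δ k (-1, b, c) (mukaiV Δ h) →
      0 < b ∧ Δ * h ^ 2 - 1 ≤ Δ * k ^ 2 * b ^ 2 ∧ 4 * k ^ 2 * b ^ 2 < 9 * h ^ 2) ∧
    (2 * k ≥ 3 * h → ¬ ∃ b c : ℤ, IsWallDatum Δ h k (-1, b, c) ∧
      0 ≤ mukaiPair Δ k (-1, b, c) (mukaiV Δ h)) := by
  refine ⟨fun b c hw hj => ?_, fun hkh ⟨b, c, hw, hj⟩ => ?_⟩
  · have hb := hw.neg_one_b_pos hΔ hk hj
    have hlt := hw.neg_one_two_mul_b_lt hΔ hh hk hj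
    refine ⟨hb, hw.neg_one_sub_one_le_mul_sq hj, ?_⟩
    have hsq : (2 * k * b) ^ 2 < (3 * h) ^ 2 := by gcongr
    linarith
  · have hb := hw.neg_one_b_pos hΔ hk hj
    have hlt := hw.neg_one_two_mul_b_lt hΔ hh hk hj
    have : 2 * k ≤ 2 * k * b := le_mul_of_one_le_right (by positivity) hb
    omega

/-- Case 3 of the proof of the Main Theorem: a numerical wall datum with `a = −1` and
`j(w) ≥ 0` satisfies `b > 0`, `Δk²b² ≥ Δh² − 1` and `4k²b² < 9h²`; in particular none
exists when `2k ≥ 3h`. -/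
theorem wall_datum_case_a_eq_neg_one (Δ h k : ℤ) (hΔ : 0 < Δ) (hh : 0 < h) (hk : 0 < k)
    (hgcd : Int.gcd h k = 1) :
    (∀ b c : ℤ, IsWallDatum Δ h k (-1, b, c) →
      0 ≤ mukaiPair Δ k (-1, b, c) (mukaiV Δ h) →
      0 < b ∧ Δ * h ^ 2 - 1 ≤ Δ * k ^ 2 * b ^ 2 ∧ 4 * k ^ 2 * b ^ 2 < 9 * h ^ 2) ∧
    (2 * k ≥ 3 * h → ¬ ∃ b c : ℤ, IsWallDatum Δ h k (-1, b, c) ∧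
      0 ≤ mukaiPair Δ k (-1, b, c) (mukaiV Δ h)) :=
  wall_datum_case_a_eq_neg_one_general Δ h k hΔ hh hk
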